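/- arXiv:2312.06973 — 2 statements merged into one kernel-verified Lean document; each statement's English description precedes it below -/
import Mathlib

section
/- Let G be a finite graph, v a vertex of G, and G' the graph obtained by taking two disjoint copies G1, G2 of G and adding an edge from the copy v1 of v in G1 to every vertex of G2. Then the number of minimal vertex covers of G' not containing v1 equals the number of minimal vertex covers of G not containing v. -/
open scoped Classical

/-- `X` is a vertex cover of `G`: every edge has an endpoint in `X`. -/
def IsVC {V : Type*} (G : SimpleGraph V) (X : Finset V) : Prop :=
  ∀ ⦃a b : V⦄, G.Adj a b → a ∈ X ∨ b ∈ X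

/-- `X` is a minimal vertex cover of `G`. -/
def IsMinVC {V : Type*} (G : SimpleGraph V) (X : Finset V) : Prop :=
  IsVC G X ∧ ∀ Y : Finset V, Y ⊂ X → ¬ IsVC G Y

/-- The number of minimal vertex covers of `G`. -/
noncomputable def mvc {V : Type*} [Fintype V] (G : SimpleGraph V) : ℕ :=
  (Finset.univ.powerset.filter (fun X => IsMinVC G X)).card

/-- The number of minimal vertex covers of `G` containing `v`. -/
noncomputable def mvcWith {V : Type*} [Fintype V] (G : SimpleGraph V) (v : V) : ℕ :=
  (Finset.univ.powerset.filter (fun X => IsMinVC G X ∧ v ∈ X)).card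

/-- The number of minimal vertex covers of `G` not containing `v`. -/
noncomputable def mvcWithout {V : Type*} [Fintype V] (G : SimpleGraph V) (v : V) : ℕ :=
  (Finset.univ.powerset.filter (fun X => IsMinVC G X ∧ v ∉ X)).card

/-- The doubled graph `G_v^[2]`: two disjoint copies of `G`, with the first copy
of `v` joined by an edge to every vertex of the second copy. -/
def doubled {V : Type*} (G : SimpleGraph V) (v : V) : SimpleGraph (V ⊕ V) where
  Adj x y :=
    match x, y with
    | .inl a, .inl b => G.Adj a b
    | .inr a, .inr b => G.Adj a b
    | .inl a, .inr _ => a = v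
    | .inr _, .inl b => b = v
  symm := by
    constructor
    intro x y h
    cases x <;> cases y <;> simp_all <;> exact G.adj_symm h
  loopless := by
    constructor
    intro x
    cases x <;> simp

section AuxMVC

variable {V : Type*} [Fintype V]

/-- Lift a set of vertices of `G` to the doubled graph: its copy in the first
component together with the whole second component. -/
noncomputable def liftVC (X : Finset V) : Finset (V ⊕ V) :=
  X.image Sum.inl ∪ Finset.univ.image Sum.inr

/-- Trace of a vertex set of the doubled graph on the first component. -/
noncomputable def traceVC (X' : Finset (V ⊕ V)) : Finset V :=
  Finset.univ.filter (fun a => Sum.inl a ∈ X')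

@[simp] lemma mem_liftVC_inl (X : Finset V) (a : V) :
    Sum.inl a ∈ liftVC X ↔ a ∈ X := by
  simp [liftVC]

@[simp] lemma mem_liftVC_inr (X : Finset V) (b : V) :
    Sum.inr b ∈ liftVC X := by
  simp [liftVC]

@[simp] lemma mem_traceVC (X' : Finset (V ⊕ V)) (a : V) :
    a ∈ traceVC X' ↔ Sum.inl a ∈ X' := by
  simp [traceVC]

lemma liftVC_subset_liftVC {X Y : Finset V} (h : X ⊆ Y) : liftVC X ⊆ liftVC Y := by
  intro x hx
  cases x with
  | inl a => simp only [mem_liftVC_inl] at hx ⊢; exact h hx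
  | inr b => simp

lemma adj_inl_inl {G : SimpleGraph V} {v a b : V} :
    (doubled G v).Adj (Sum.inl a) (Sum.inl b) ↔ G.Adj a b := Iff.rfl

lemma adj_inl_inr {G : SimpleGraph V} {v a b : V} :
    (doubled G v).Adj (Sum.inl a) (Sum.inr b) ↔ a = v := Iff.rfl

/-- The lift of a vertex cover is a vertex cover of the doubled graph. -/
lemma isVC_liftVC {G : SimpleGraph V} {v : V} {X : Finset V} (hX : IsVC G X) :
    IsVC (doubled G v) (liftVC X) := by
  intro x y hxy
  cases x with
  | inl a =>
    cases y with
    | inl b =>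
      rcases hX (adj_inl_inl.mp hxy) with h | h
      · exact Or.inl (by simpa using h)
      · exact Or.inr (by simpa using h)
    | inr b => exact Or.inr (by simp)
  | inr a =>
    cases y with
    | inl b => exact Or.inl (by simp)
    | inr b => exact Or.inl (by simp)

/-- A vertex cover of the doubled graph avoiding `inl v` contains all of the
second component. -/
lemma inr_mem_of_isVC {G : SimpleGraph V} {v : V} {X' : Finset (V ⊕ V)}
    (hX' : IsVC (doubled G v) X') (hv : Sum.inl v ∉ X') (b : V) : Sum.inr b ∈ X' := by
  rcases hX' (show (doubled G v).Adj (Sum.inl v) (Sum.inr b) from rfl) with h | h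
  · exact absurd h hv
  · exact h

/-- The trace of a vertex cover avoiding `inl v` is a vertex cover of `G`. -/
lemma isVC_traceVC {G : SimpleGraph V} {v : V} {X' : Finset (V ⊕ V)}
    (hX' : IsVC (doubled G v) X') : IsVC G (traceVC X') := by
  intro a b hab
  rcases hX' (adj_inl_inl.mpr hab : (doubled G v).Adj (Sum.inl a) (Sum.inl b)) with h | h
  · exact Or.inl (by simpa using h)
  · exact Or.inr (by simpa using h)

lemma liftVC_traceVC {G : SimpleGraph V} {v : V} {X' : Finset (V ⊕ V)}
    (hX' : IsVC (doubled G v) X') (hv : Sum.inl v ∉ X') : liftVC (traceVC X') = X' := by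
  ext x
  cases x with
  | inl a => simp
  | inr b => simp [inr_mem_of_isVC hX' hv b]

lemma traceVC_liftVC (X : Finset V) : traceVC (liftVC X) = X := by
  ext a; simp

/-- Main bijection lemma, forward direction. -/
lemma isMinVC_liftVC {G : SimpleGraph V} {v : V} {X : Finset V}
    (hX : IsMinVC G X) (hv : v ∉ X) : IsMinVC (doubled G v) (liftVC X) := by
  refine ⟨isVC_liftVC hX.1, ?_⟩
  intro Y hY hYvc
  -- v1 is not in lift X, hence not in Y
  have hvY : Sum.inl v ∉ Y := fun h => hv (by simpa using hY.1 h)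
  -- so Y contains all of the second component
  have hall : ∀ b : V, Sum.inr b ∈ Y := inr_mem_of_isVC hYvc hvY
  -- trace of Y is a vertex cover of G strictly below X
  have htr : traceVC Y ⊆ X := by
    intro a ha
    simpa using hY.1 (by simpa using ha : Sum.inl a ∈ Y)
  have hYeq : liftVC (traceVC Y) = Y := liftVC_traceVC hYvc hvY
  have hne : traceVC Y ≠ X := by
    intro h
    apply hY.not_subset
    rw [← hYeq, h]
  exact hX.2 (traceVC Y) (ssubset_of_subset_of_ne htr hne) (isVC_traceVC hYvc)

/-- Main bijection lemma, backward direction. -/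
lemma isMinVC_traceVC {G : SimpleGraph V} {v : V} {X' : Finset (V ⊕ V)}
    (hX' : IsMinVC (doubled G v) X') (hv : Sum.inl v ∉ X') : IsMinVC G (traceVC X') := by
  refine ⟨isVC_traceVC hX'.1, ?_⟩
  intro Y hY hYvc
  have hlift : liftVC Y ⊂ X' := by
    rw [← liftVC_traceVC hX'.1 hv]
    constructor
    · exact liftVC_subset_liftVC hY.1
    · intro h
      apply hY.not_subset
      intro a ha
      have : Sum.inl a ∈ liftVC Y := h (by simpa using ha)
      simpa using this
  exact hX'.2 (liftVC Y) hlift (isVC_liftVC hYvc)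

end AuxMVC

theorem mvcWithout_doubled {V : Type*} [Fintype V] (G : SimpleGraph V) (v : V) :
    mvcWithout (doubled G v) (Sum.inl v) = mvcWithout G v := by
  
  unfold mvcWithout
  apply Finset.card_nbij' traceVC liftVC
  · intro X' hX'
    simp only [Finset.mem_coe, Finset.mem_filter, Finset.mem_powerset] at hX' ⊢
    exact ⟨Finset.subset_univ _, isMinVC_traceVC hX'.2.1 hX'.2.2,
      by simpa using hX'.2.2⟩
  · intro X hX
    simp only [Finset.mem_coe, Finset.mem_filter, Finset.mem_powerset] at hX ⊢
    exact ⟨Finset.subset_univ _, isMinVC_liftVC hX.2.1 hX.2.2,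
      by simpa using hX.2.2⟩
  · intro X' hX'
    simp only [Finset.mem_coe, Finset.mem_filter, Finset.mem_powerset] at hX'
    exact liftVC_traceVC hX'.2.1.1 hX'.2.2
  · intro X _
    exact traceVC_liftVC X
end

section
/- Minimal hitting set duality between abductive and contrastive explanations: a set Y of features is a contrastive explanation (CXp) for instance (v, c) if and only if Y is a minimal hitting set of the collection of all abductive explanations (AXp's) for (v, c); and symmetrically, X is an AXp if and only if X is a minimal hitting set of the collection of all CXp's. -/
open scoped Classical

/-- `X` is a weak abductive explanation: fixing the features in `X` to their
values in `v` entails prediction `c`. -/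
def WeakAXp {m : ℕ} {K : Type*} {D : Fin m → Type*}
    (κ : (∀ i, D i) → K) (v : ∀ i, D i) (c : K) (X : Finset (Fin m)) : Prop :=
  ∀ x : ∀ i, D i, (∀ i ∈ X, x i = v i) → κ x = c

/-- `X` is an abductive explanation (AXp): a subset-minimal weak AXp. -/
def AXp {m : ℕ} {K : Type*} {D : Fin m → Type*}
    (κ : (∀ i, D i) → K) (v : ∀ i, D i) (c : K) (X : Finset (Fin m)) : Prop :=
  WeakAXp κ v c X ∧ ∀ Y : Finset (Fin m), Y ⊂ X → ¬ WeakAXp κ v c Y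

/-- `Y` is a weak contrastive explanation: some point agreeing with `v`
outside `Y` gets a class other than `c`. -/
def WeakCXp {m : ℕ} {K : Type*} {D : Fin m → Type*}
    (κ : (∀ i, D i) → K) (v : ∀ i, D i) (c : K) (Y : Finset (Fin m)) : Prop :=
  ∃ x : ∀ i, D i, (∀ i ∉ Y, x i = v i) ∧ κ x ≠ c

/-- `Y` is a contrastive explanation (CXp): a subset-minimal weak CXp. -/
def CXp {m : ℕ} {K : Type*} {D : Fin m → Type*}
    (κ : (∀ i, D i) → K) (v : ∀ i, D i) (c : K) (Y : Finset (Fin m)) : Prop :=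
  WeakCXp κ v c Y ∧ ∀ Z : Finset (Fin m), Z ⊂ Y → ¬ WeakCXp κ v c Z

/-- `t` is a hitting set of the family `A` of feature sets. -/
def IsHS {m : ℕ} (A : Set (Finset (Fin m))) (t : Finset (Fin m)) : Prop :=
  ∀ s ∈ A, (t ∩ s).Nonempty

/-- `t` is a minimal hitting set of the family `A`. -/
def IsMinHS {m : ℕ} (A : Set (Finset (Fin m))) (t : Finset (Fin m)) : Prop :=
  IsHS A t ∧ ∀ u : Finset (Fin m), u ⊂ t → ¬ IsHS A u

section Aux

variable {m : ℕ} {K : Type*} {D : Fin m → Type*}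
variable (κ : (∀ i, D i) → K) (v : ∀ i, D i) (c : K)

lemma weakAXp_mono {X Y : Finset (Fin m)} (h : X ⊆ Y) (hX : WeakAXp κ v c X) :
    WeakAXp κ v c Y := fun x hx => hX x (fun i hi => hx i (h hi))

lemma weakCXp_mono {X Y : Finset (Fin m)} (h : X ⊆ Y) (hX : WeakCXp κ v c X) :
    WeakCXp κ v c Y := by
  obtain ⟨x, hx, hne⟩ := hX
  exact ⟨x, fun i hi => hx i (fun hm => hi (h hm)), hne⟩

lemma exists_minimal_subset {P : Finset (Fin m) → Prop} {S : Finset (Fin m)} (hS : P S) :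
    ∃ T, T ⊆ S ∧ P T ∧ ∀ U, U ⊂ T → ¬ P U := by
  classical
  induction S using Finset.strongInduction with
  | _ S ih =>
    by_cases h : ∀ U, U ⊂ S → ¬ P U
    · exact ⟨S, subset_rfl, hS, h⟩
    · push_neg at h
      obtain ⟨U, hU, hPU⟩ := h
      obtain ⟨T, hTU, hT⟩ := ih U hU hPU
      exact ⟨T, hTU.trans hU.subset, hT⟩

lemma hs_axp_iff (t : Finset (Fin m)) :
    IsHS {X : Finset (Fin m) | AXp κ v c X} t ↔ WeakCXp κ v c t := by
  constructor
  · intro ht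
    by_contra hnc
    have hw : WeakAXp κ v c tᶜ := by
      intro x hx
      by_contra hne
      exact hnc ⟨x, fun i hi => hx i (Finset.mem_compl.2 hi), hne⟩
    obtain ⟨T, hTsub, hwT, hminT⟩ := exists_minimal_subset hw
    obtain ⟨i, hi⟩ := ht T ⟨hwT, hminT⟩
    have := Finset.mem_inter.1 hi
    exact Finset.mem_compl.1 (hTsub this.2) this.1
  · rintro ⟨x, hx, hne⟩ X hX
    rw [Finset.nonempty_iff_ne_empty]
    intro hdisj
    apply hne
    apply hX.1 x
    intro i hiX
    apply hx i
    intro hit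
    have : i ∈ t ∩ X := Finset.mem_inter.2 ⟨hit, hiX⟩
    simp [hdisj] at this

lemma hs_cxp_iff (t : Finset (Fin m)) :
    IsHS {Y : Finset (Fin m) | CXp κ v c Y} t ↔ WeakAXp κ v c t := by
  constructor
  · intro ht
    by_contra hna
    simp only [WeakAXp, not_forall] at hna
    obtain ⟨x, hx, hne⟩ := hna
    have hw : WeakCXp κ v c tᶜ :=
      ⟨x, fun i hi => hx i (by simpa using hi), hne⟩
    obtain ⟨T, hTsub, hwT, hminT⟩ := exists_minimal_subset hw
    obtain ⟨i, hi⟩ := ht T ⟨hwT, hminT⟩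
    have := Finset.mem_inter.1 hi
    exact Finset.mem_compl.1 (hTsub this.2) this.1
  · intro hw Y hY
    rw [Finset.nonempty_iff_ne_empty]
    intro hdisj
    obtain ⟨x, hx, hne⟩ := hY.1
    apply hne
    apply hw x
    intro i hit
    apply hx i
    intro hiY
    have : i ∈ t ∩ Y := Finset.mem_inter.2 ⟨hit, hiY⟩
    simp [hdisj] at this

end Aux

theorem axp_cxp_minimal_hitting_set_duality {m : ℕ} {K : Type*} {D : Fin m → Type*}
    [∀ i, Fintype (D i)]
    (κ : (∀ i, D i) → K) (v : ∀ i, D i) (c : K) (hc : κ v = c) :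
    (∀ Y : Finset (Fin m),
        CXp κ v c Y ↔ IsMinHS {X : Finset (Fin m) | AXp κ v c X} Y) ∧
    (∀ X : Finset (Fin m),
        AXp κ v c X ↔ IsMinHS {Y : Finset (Fin m) | CXp κ v c Y} X) := by
  constructor
  · intro Y
    unfold CXp IsMinHS
    rw [hs_axp_iff]
    exact and_congr Iff.rfl
      ⟨fun h2 u hu h => h2 u hu ((hs_axp_iff κ v c u).1 h),
       fun h2 u hu h => h2 u hu ((hs_axp_iff κ v c u).2 h)⟩
  · intro X
    unfold AXp IsMinHS
    rw [hs_cxp_iff]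
    exact and_congr Iff.rfl
      ⟨fun h2 u hu h => h2 u hu ((hs_cxp_iff κ v c u).1 h),
       fun h2 u hu h => h2 u hu ((hs_cxp_iff κ v c u).2 h)⟩
end
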